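/- arXiv:1401.6777 — 4 statements merged into one kernel-verified Lean document; each statement's English description precedes it below -/
import Mathlib

section
/- Let ω > 0 and let u : ℝ × ℝ → ℝ be a smooth function of (x,t); set m := u − u_xx and assume m(x,t) + ω > 0 for all (x,t). Then u satisfies the Camassa–Holm equation at a point (x,t) if and only if at that point ∂_t √((m+ω)/ω) = −∂_x ( u √((m+ω)/ω) ). -/
noncomputable def pdx (f : ℝ → ℝ → ℝ) (x t : ℝ) : ℝ := deriv (fun x' => f x' t) x
noncomputable def pdt (f : ℝ → ℝ → ℝ) (x t : ℝ) : ℝ := deriv (fun t' => f x t') t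

open Function

lemma contDiff_pdx {F : ℝ → ℝ → ℝ} (hF : ContDiff ℝ (⊤ : ℕ∞) (uncurry F)) :
    ContDiff ℝ (⊤ : ℕ∞) (uncurry (pdx F)) := by
  have h : uncurry (pdx F) = fun p : ℝ × ℝ =>
      fderiv ℝ (fun x' => F x' p.2) p.1 1 := by
    funext p; rfl
  rw [h]
  exact ContDiff.fderiv_apply (f := fun (p : ℝ × ℝ) (x' : ℝ) => F x' p.2)
    (hF.comp (contDiff_snd.prodMk (contDiff_snd.comp contDiff_fst)))
    contDiff_fst contDiff_const (by simp)

lemma hasDerivAt_pdx {F : ℝ → ℝ → ℝ} (hF : ContDiff ℝ (⊤ : ℕ∞) (uncurry F)) (x t : ℝ) :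
    HasDerivAt (fun x' => F x' t) (pdx F x t) x := by
  have : DifferentiableAt ℝ (fun x' => F x' t) x :=
    DifferentiableAt.comp (g := uncurry F) (f := fun x' : ℝ => (x', t)) x
      (hF.differentiable (by simp) (x, t))
      (differentiableAt_id.prodMk (differentiableAt_const t))
  exact this.hasDerivAt

lemma hasDerivAt_pdt {F : ℝ → ℝ → ℝ} (hF : ContDiff ℝ (⊤ : ℕ∞) (uncurry F)) (x t : ℝ) :
    HasDerivAt (fun t' => F x t') (pdt F x t) t := by
  have : DifferentiableAt ℝ (fun t' => F x t') t :=
    DifferentiableAt.comp (g := uncurry F) (f := fun t' : ℝ => (x, t')) t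
      (hF.differentiable (by simp) (x, t))
      ((differentiableAt_const x).prodMk differentiableAt_id)
  exact this.hasDerivAt


/-- For smooth `u` with momentum `m = u - u_xx` satisfying `m + ω > 0`
everywhere (`ω > 0`), `u` satisfies the Camassa–Holm equation at `(x,t)` iff at that
point `∂_t √((m+ω)/ω) = −∂_x ( u √((m+ω)/ω) )`. -/
theorem stmt_1 (ω : ℝ) (hω : 0 < ω) (u : ℝ → ℝ → ℝ)
    (hu : ContDiff ℝ (⊤ : ℕ∞) (Function.uncurry u))
    (m : ℝ → ℝ → ℝ) (hm : ∀ x t, m x t = u x t - pdx (pdx u) x t)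
    (hpos : ∀ x t, m x t + ω > 0)
    (q : ℝ → ℝ → ℝ) (hq : ∀ x t, q x t = Real.sqrt ((m x t + ω) / ω))
    (x t : ℝ) :
    (pdt u x t - pdt (pdx (pdx u)) x t + 2 * ω * pdx u x t
        + 3 * u x t * pdx u x t
      = 2 * pdx u x t * pdx (pdx u) x t + u x t * pdx (pdx (pdx u)) x t)
    ↔ (pdt q x t = - pdx (fun x' t' => u x' t' * q x' t') x t) := by
  have h2 : ContDiff ℝ (⊤ : ℕ∞) (uncurry (pdx (pdx u))) := contDiff_pdx (contDiff_pdx hu)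
  set M : ℝ → ℝ → ℝ := fun x t => u x t - pdx (pdx u) x t with hMdef
  have hM : ContDiff ℝ (⊤ : ℕ∞) (uncurry M) := by
    have h : uncurry M = uncurry u - uncurry (pdx (pdx u)) := rfl
    rw [h]; exact hu.sub h2
  have hmM : ∀ x' t', m x' t' = M x' t' := fun x' t' => hm x' t'
  have hP : (0:ℝ) < M x t + ω := by rw [← hmM]; exact hpos x t
  have hPdiv : (0:ℝ) < (M x t + ω) / ω := div_pos hP hω
  set Q : ℝ := Real.sqrt ((M x t + ω) / ω) with hQdef
  have hQpos : 0 < Q := Real.sqrt_pos.mpr hPdiv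
  have hQ2 : Q * Q = (M x t + ω) / ω := Real.mul_self_sqrt hPdiv.le
  have hQ2' : Q * Q * ω = M x t + ω := by
    rw [hQ2]; field_simp
  set Mt := pdt M x t with hMtdef
  set Mx := pdx M x t with hMxdef
  have hqt : pdt q x t = (Mt / ω) / (2 * Q) := by
    have hA : HasDerivAt (fun t' => (M x t' + ω) / ω) (Mt / ω) t :=
      ((hasDerivAt_pdt hM x t).add_const ω).div_const ω
    have hd := (hA.sqrt hPdiv.ne').deriv
    show deriv (fun t' => q x t') t = _
    have hfun : (fun t' => q x t') = fun t' => Real.sqrt ((M x t' + ω) / ω) := by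
      funext t'; rw [hq, hmM]
    rw [hfun]
    exact hd
  have hqx : pdx (fun x' t' => u x' t' * q x' t') x t
      = pdx u x t * Q + u x t * ((Mx / ω) / (2 * Q)) := by
    have hB : HasDerivAt (fun x' => (M x' t + ω) / ω) (Mx / ω) x :=
      ((hasDerivAt_pdx hM x t).add_const ω).div_const ω
    have hQx : HasDerivAt (fun x' => Real.sqrt ((M x' t + ω) / ω))
        ((Mx / ω) / (2 * Q)) x := hB.sqrt hPdiv.ne'
    have hprod := (hasDerivAt_pdx hu x t).mul hQx
    show deriv (fun x' => u x' t * q x' t) x = _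
    have hfun : (fun x' => u x' t * q x' t)
        = fun x' => u x' t * Real.sqrt ((M x' t + ω) / ω) := by
      funext x'; rw [hq, hmM]
    rw [hfun]
    exact hprod.deriv
  have hMt_eq : Mt = pdt u x t - pdt (pdx (pdx u)) x t :=
    ((hasDerivAt_pdt hu x t).sub (hasDerivAt_pdt h2 x t)).deriv
  have hMx_eq : Mx = pdx u x t - pdx (pdx (pdx u)) x t :=
    ((hasDerivAt_pdx hu x t).sub (hasDerivAt_pdx h2 x t)).deriv
  have hMval : M x t = u x t - pdx (pdx u) x t := rfl
  rw [hqt, hqx]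
  have hQne : Q ≠ 0 := hQpos.ne'
  have hωne : ω ≠ 0 := hω.ne'
  have hiff : (Mt / ω / (2 * Q)
        = -(pdx u x t * Q + u x t * (Mx / ω / (2 * Q))))
      ↔ (Mt = -(2 * (M x t + ω) * pdx u x t + u x t * Mx)) := by
    constructor
    · intro hB
      field_simp at hB
      linear_combination hB - (2 * pdx u x t) * hQ2'
    · intro hK
      field_simp
      linear_combination hK + (2 * pdx u x t) * hQ2'
  rw [hiff]
  constructor
  · intro h
    linear_combination h + hMt_eq + (u x t) * hMx_eq + (2 * pdx u x t) * hMval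
  · intro h
    linear_combination h - hMt_eq - (u x t) * hMx_eq - (2 * pdx u x t) * hMval
end

section
/- Let ω > 0, λ ∈ ℂ, and let m : ℝ → ℝ be twice continuously differentiable with m(x) + ω > 0 for all x. Write q := √((m+ω)/ω), assume q − 1 ∈ L¹[x,∞) for every x, and define y(x) := x − ∫_x^{+∞} (q(ξ) − 1) dξ. Let φ : ℝ → ℂ be twice continuously differentiable satisfying (ω/(m+ω))·(−φ'' + (1/4)φ) = λ φ on ℝ, and let ψ : ℝ → ℂ be twice continuously differentiable such that ψ(y(x)) = q(x)^{1/2} φ(x) for all x. Then for every x: −ψ''(y(x)) + v(x) ψ(y(x)) = (λ − 1/4) ψ(y(x)), where v := −m/(4(m+ω)) + ω m''/(4(m+ω)²) − 5ω (m')²/(16(m+ω)³). -/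
/-!
Put `s := √q = ((m + ω)/ω)^{1/4}`, so that `y' = s²` and `ψ ∘ y = s φ`. Two applications of the
chain rule give `ψ''(y) = ((s s'' - 2 s'²) φ + s² φ'') / s⁵`. Writing `m = ω s⁴ - ω` turns the
potential into `v = -1/4 + 1/(4 s⁴) + s''/s⁵ - 2 s'²/s⁶`, and the Camassa–Holm equation into
`φ'' = (1/4 - λ s⁴) φ`; after these substitutions the claim is an algebraic identity.
-/

open MeasureTheory Set

theorem hasDerivAt_integral_Ici {E : Type*} [NormedAddCommGroup E] [NormedSpace ℝ E]
    [CompleteSpace E] {f : ℝ → E} (hf : Continuous f) (hint : ∀ t, IntegrableOn f (Ioi t))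
    (x : ℝ) : HasDerivAt (fun t => ∫ ξ in Ici t, f ξ) (-f x) x := by
  have htail : (fun t => ∫ ξ in Ici t, f ξ) = fun t => (∫ ξ in Ioi x, f ξ) - ∫ ξ in x..t, f ξ := by
    funext t
    rw [integral_Ici_eq_integral_Ioi, ← intervalIntegral.integral_Ioi_sub_Ioi' (hint x) (hint t),
      sub_sub_cancel]
  rw [htail, ← zero_sub]
  exact (hasDerivAt_const x _).sub (hf.integral_hasStrictDerivAt x x).hasDerivAt

theorem deriv_eq_deriv_comp_div {g : ℝ → ℂ} {y : ℝ → ℝ} {t y' : ℝ}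
    (hg : DifferentiableAt ℝ g (y t)) (hy : HasDerivAt y y' t) (hy' : y' ≠ 0) :
    deriv g (y t) = deriv (g ∘ y) t / y' := by
  rw [(hg.hasDerivAt.scomp t hy).deriv, Complex.real_smul,
    mul_div_cancel_left₀ _ (Complex.ofReal_ne_zero.2 hy')]

theorem deriv_deriv_of_comp_eq_mul {s y : ℝ → ℝ} {φ ψ : ℝ → ℂ}
    (hs : ContDiff ℝ 2 s) (hs0 : ∀ t, s t ≠ 0) (hy : ∀ t, HasDerivAt y (s t ^ 2) t)
    (hφ : ContDiff ℝ 2 φ) (hψ : ContDiff ℝ 2 ψ) (hψφ : ∀ t, ψ (y t) = s t * φ t) (x : ℝ) :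
    deriv (deriv ψ) (y x) = (((s x * deriv (deriv s) x - 2 * deriv s x ^ 2 : ℝ) : ℂ) * φ x
      + ((s x ^ 2 : ℝ) : ℂ) * deriv (deriv φ) x) / ((s x ^ 5 : ℝ) : ℂ) := by
  have hs' (t : ℝ) : HasDerivAt (fun t => (s t : ℂ)) ((deriv s t : ℝ) : ℂ) t :=
    ((hs.differentiable two_ne_zero) t).hasDerivAt.ofReal_comp
  have hs'' : HasDerivAt (fun t => ((deriv s t : ℝ) : ℂ)) ((deriv (deriv s) x : ℝ) : ℂ) x :=
    (hs.differentiable_deriv_two x).hasDerivAt.ofReal_comp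
  have hφ' (t : ℝ) : HasDerivAt φ (deriv φ t) t := (hφ.differentiable two_ne_zero t).hasDerivAt
  have hφ'' : HasDerivAt (deriv φ) (deriv (deriv φ) x) x :=
    (hφ.differentiable_deriv_two x).hasDerivAt
  have hψ' (t : ℝ) :
      deriv ψ (y t) = (((deriv s t : ℝ) : ℂ) * φ t + s t * deriv φ t) / ((s t ^ 2 : ℝ) : ℂ) := by
    rw [deriv_eq_deriv_comp_div (hψ.differentiable two_ne_zero _) (hy t) (pow_ne_zero 2 (hs0 t)),
      show ψ ∘ y = fun t => (s t : ℂ) * φ t from funext hψφ, ((hs' t).fun_mul (hφ' t)).deriv]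
  have hquot := ((hs''.fun_mul (hφ' x)).fun_add ((hs' x).fun_mul hφ'')).fun_div
    ((hs' x).fun_pow 2) (by exact_mod_cast pow_ne_zero 2 (hs0 x))
  rw [deriv_eq_deriv_comp_div (hψ.differentiable_deriv_two _) (hy x) (pow_ne_zero 2 (hs0 x)),
    show deriv ψ ∘ y = _ from funext hψ']
  push_cast at hquot ⊢
  rw [hquot.deriv]
  have hsx : (s x : ℂ) ≠ 0 := by exact_mod_cast hs0 x
  field_simp
  ring

theorem potential_eq_of_eq_pow_four {ω : ℝ} (hω : ω ≠ 0) {s m : ℝ → ℝ} (hs : ContDiff ℝ 2 s)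
    (hm : ∀ t, m t = ω * s t ^ 4 - ω) {x : ℝ} (hx : s x ≠ 0) :
    -(m x) / (4 * (m x + ω)) + ω * deriv (deriv m) x / (4 * (m x + ω) ^ 2)
        - 5 * ω * (deriv m x) ^ 2 / (16 * (m x + ω) ^ 3)
      = -1 / 4 + 1 / (4 * s x ^ 4) + deriv (deriv s) x / s x ^ 5
        - 2 * deriv s x ^ 2 / s x ^ 6 := by
  have hs' (t : ℝ) : HasDerivAt s (deriv s t) t := (hs.differentiable two_ne_zero t).hasDerivAt
  have hs'' : HasDerivAt (deriv s) (deriv (deriv s) x) x :=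
    (hs.differentiable_deriv_two x).hasDerivAt
  have hm' : deriv m = fun t => 4 * ω * (s t ^ 3 * deriv s t) := by
    funext t
    rw [funext hm, ((((hs' t).fun_pow 4).const_mul ω).sub_const ω).deriv]
    norm_num
    ring
  have hm'' : deriv (deriv m) x
      = 4 * ω * ((3 * s x ^ 2 * deriv s x) * deriv s x + s x ^ 3 * deriv (deriv s) x) := by
    rw [hm', ((((hs' x).fun_pow 3).fun_mul hs'').const_mul (4 * ω)).deriv]
    norm_num
  rw [hm'', hm', hm x]
  field_simp
  ring

/-- the Liouville transformation `y(x) = x − ∫_x^∞ (q − 1)`,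
`ψ(y(x)) = q(x)^{1/2} φ(x)` with `q = √((m+ω)/ω)` carries the CH x-equation
`(ω/(m+ω))(−φ'' + φ/4) = λφ` into the Schrödinger equation
`−ψ'' + v ψ = (λ − 1/4) ψ` with potential
`v = −m/(4(m+ω)) + ω m''/(4(m+ω)²) − 5ω (m')²/(16(m+ω)³)`. -/
theorem stmt_7 (ω : ℝ) (hω : 0 < ω) (lmb : ℂ)
    (m : ℝ → ℝ) (hm : ContDiff ℝ 2 m) (hpos : ∀ x, m x + ω > 0)
    (q : ℝ → ℝ) (hq : ∀ x, q x = Real.sqrt ((m x + ω) / ω))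
    (hint : ∀ x : ℝ, IntegrableOn (fun ξ => q ξ - 1) (Ici x))
    (y : ℝ → ℝ) (hy : ∀ x, y x = x - ∫ ξ in Ici x, (q ξ - 1))
    (φ : ℝ → ℂ) (hφ : ContDiff ℝ 2 φ)
    (hode : ∀ x : ℝ,
      ((ω / (m x + ω) : ℝ) : ℂ) * (-(deriv (deriv φ) x) + (1 / 4) * φ x)
        = lmb * φ x)
    (ψ : ℝ → ℂ) (hψ : ContDiff ℝ 2 ψ)
    (hψφ : ∀ x : ℝ, ψ (y x) = (Real.sqrt (q x) : ℂ) * φ x)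
    (v : ℝ → ℝ)
    (hv : ∀ x, v x = -(m x) / (4 * (m x + ω))
        + ω * deriv (deriv m) x / (4 * (m x + ω) ^ 2)
        - 5 * ω * (deriv m x) ^ 2 / (16 * (m x + ω) ^ 3)) :
    ∀ x : ℝ,
      -(deriv (deriv ψ) (y x)) + (v x : ℂ) * ψ (y x)
        = (lmb - 1 / 4) * ψ (y x) := by
  intro x
  have hmω (t : ℝ) : 0 < (m t + ω) / ω := div_pos (hpos t) hω
  have hq_pos (t : ℝ) : 0 < q t := hq t ▸ Real.sqrt_pos.2 (hmω t)
  have hs_pos (t : ℝ) : 0 < √(q t) := Real.sqrt_pos.2 (hq_pos t)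
  have hs_sq (t : ℝ) : √(q t) ^ 2 = q t := Real.sq_sqrt (hq_pos t).le
  have hm_eq (t : ℝ) : m t = ω * √(q t) ^ 4 - ω := by
    rw [show √(q t) ^ 4 = (√(q t) ^ 2) ^ 2 by ring, hs_sq, hq t, Real.sq_sqrt (hmω t).le]
    field_simp
    ring
  have hs : ContDiff ℝ 2 fun t => √(q t) := by
    rw [funext hq]
    exact (((hm.add contDiff_const).div_const ω).sqrt fun t => (hmω t).ne').sqrt
      fun t => (hq t ▸ hq_pos t).ne'
  have hy' (t : ℝ) : HasDerivAt y (√(q t) ^ 2) t := by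
    have hq_cont : Continuous q := (hs.continuous.pow 2).congr hs_sq
    rw [funext hy, hs_sq]
    exact ((hasDerivAt_id t).sub (hasDerivAt_integral_Ici (hq_cont.sub continuous_const)
      (fun t => (hint t).mono_set Ioi_subset_Ici_self) t)).congr_deriv (by simp)
  have hs0 : (√(q x) : ℂ) ≠ 0 := by exact_mod_cast (hs_pos x).ne'
  have hφ'' : deriv (deriv φ) x = (1 / 4 - lmb * √(q x) ^ 4) * φ x := by
    have hode_x := hode x
    rw [hm_eq x] at hode_x
    push_cast at hode_x
    field_simp [show (ω : ℂ) ≠ 0 by exact_mod_cast hω.ne'] at hode_x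
    linear_combination -hode_x / 4
  rw [hψφ x, deriv_deriv_of_comp_eq_mul hs (fun t => (hs_pos t).ne') hy' hφ hψ hψφ x, hv x,
    potential_eq_of_eq_pow_four hω.ne' hs hm_eq (hs_pos x).ne', hφ'']
  push_cast
  field_simp
  ring
end

section
/- Let ω ≠ 0, λ ∈ ℂ with λ ≠ 0, let u : ℝ × ℝ → ℝ be a smooth solution of the Camassa–Holm equation with parameter ω, and set m := u − u_xx. Let φ : ℝ × ℝ → ℂ be smooth and satisfy, for all (x,t), the x-equation −φ_xx + (1/4)φ = λ ((m+ω)/ω) φ. Define Φ := φ_t + (ω/(2λ) + u) φ_x − (u_x/2) φ. Then Φ satisfies the same x-equation: −Φ_xx + (1/4)Φ = λ ((m+ω)/ω) Φ for all (x,t). -/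
noncomputable def pdxC (f : ℝ → ℝ → ℂ) (x t : ℝ) : ℂ := deriv (fun x' => f x' t) x
noncomputable def pdtC (f : ℝ → ℝ → ℂ) (x t : ℝ) : ℂ := deriv (fun t' => f x t') t

/-- `u` is a smooth solution of the Camassa–Holm equation with parameter `ω`. -/
def IsCHSolution (ω : ℝ) (u : ℝ → ℝ → ℝ) : Prop :=
  ContDiff ℝ (⊤ : ℕ∞) (Function.uncurry u) ∧
    ∀ x t : ℝ,
      pdt u x t - pdt (pdx (pdx u)) x t + 2 * ω * pdx u x t
          + 3 * u x t * pdx u x t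
        = 2 * pdx u x t * pdx (pdx u) x t + u x t * pdx (pdx (pdx u)) x t

section helpers

open Function

variable {F : Type*} [NormedAddCommGroup F] [NormedSpace ℝ F]

/-- generic partial derivative in the first variable -/
noncomputable def pA (f : ℝ → ℝ → F) (x t : ℝ) : F := deriv (fun x' => f x' t) x
/-- generic partial derivative in the second variable -/
noncomputable def pB (f : ℝ → ℝ → F) (x t : ℝ) : F := deriv (fun t' => f x t') t

variable {f : ℝ → ℝ → F}

lemma slice_diff_x (hf : ContDiff ℝ (⊤ : ℕ∞) (uncurry f)) (t x : ℝ) :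
    DifferentiableAt ℝ (fun x' => f x' t) x := by
  have h : (fun x' => f x' t) = (uncurry f) ∘ (fun x' : ℝ => (x', t)) := rfl
  rw [h]
  exact ((hf.differentiable (by simp)) (x, t)).comp x
    ((differentiableAt_id.prodMk (differentiableAt_const t)))

lemma slice_diff_t (hf : ContDiff ℝ (⊤ : ℕ∞) (uncurry f)) (x t : ℝ) :
    DifferentiableAt ℝ (fun t' => f x t') t := by
  have h : (fun t' => f x t') = (uncurry f) ∘ (fun t' : ℝ => (x, t')) := rfl
  rw [h]
  exact ((hf.differentiable (by simp)) (x, t)).comp t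
    (((differentiableAt_const x).prodMk differentiableAt_id))

lemma hasDerivAt_pA (hf : ContDiff ℝ (⊤ : ℕ∞) (uncurry f)) (x t : ℝ) :
    HasDerivAt (fun x' => f x' t) (pA f x t) x :=
  (slice_diff_x hf t x).hasDerivAt

lemma hasDerivAt_pB (hf : ContDiff ℝ (⊤ : ℕ∞) (uncurry f)) (x t : ℝ) :
    HasDerivAt (fun t' => f x t') (pB f x t) t :=
  (slice_diff_t hf x t).hasDerivAt

lemma pA_eq_fderiv (hf : ContDiff ℝ (⊤ : ℕ∞) (uncurry f)) (x t : ℝ) :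
    pA f x t = fderiv ℝ (uncurry f) (x, t) (1, 0) := by
  have h : HasDerivAt (fun x' => f x' t) (fderiv ℝ (uncurry f) (x, t) ((1 : ℝ), (0 : ℝ))) x :=
    (((hf.differentiable (by simp)) (x, t)).hasFDerivAt).comp_hasDerivAt (l := uncurry f) x
      ((hasDerivAt_id x).prodMk (hasDerivAt_const x t))
  exact ((slice_diff_x hf t x).hasDerivAt.unique h)

lemma pB_eq_fderiv (hf : ContDiff ℝ (⊤ : ℕ∞) (uncurry f)) (x t : ℝ) :
    pB f x t = fderiv ℝ (uncurry f) (x, t) (0, 1) := by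
  have h : HasDerivAt (fun t' => f x t') (fderiv ℝ (uncurry f) (x, t) ((0 : ℝ), (1 : ℝ))) t :=
    (((hf.differentiable (by simp)) (x, t)).hasFDerivAt).comp_hasDerivAt t
      ((hasDerivAt_const t x).prodMk (hasDerivAt_id t))
  exact ((slice_diff_t hf x t).hasDerivAt.unique h)

lemma contDiff_pA (hf : ContDiff ℝ (⊤ : ℕ∞) (uncurry f)) : ContDiff ℝ (⊤ : ℕ∞) (uncurry (pA f)) := by
  have he : uncurry (pA f) = fun p : ℝ × ℝ => fderiv ℝ (uncurry f) p (1, 0) := by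
    funext p
    exact pA_eq_fderiv hf p.1 p.2
  rw [he]
  exact (hf.fderiv_right (by simp)).clm_apply contDiff_const

lemma contDiff_pB (hf : ContDiff ℝ (⊤ : ℕ∞) (uncurry f)) : ContDiff ℝ (⊤ : ℕ∞) (uncurry (pB f)) := by
  have he : uncurry (pB f) = fun p : ℝ × ℝ => fderiv ℝ (uncurry f) p (0, 1) := by
    funext p
    exact pB_eq_fderiv hf p.1 p.2
  rw [he]
  exact (hf.fderiv_right (by simp)).clm_apply contDiff_const

lemma fderiv_eval (hf : ContDiff ℝ (⊤ : ℕ∞) (uncurry f)) (p : ℝ × ℝ) (v w : ℝ × ℝ) :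
    fderiv ℝ (fun q => fderiv ℝ (uncurry f) q v) p w
      = fderiv ℝ (fderiv ℝ (uncurry f)) p w v := by
  rw [fderiv_clm_apply ((hf.fderiv_right (m := (⊤ : ℕ∞)) (by simp)).differentiable (by simp) p)
    (differentiableAt_const v)]
  simp

lemma pA_pB_swap (hf : ContDiff ℝ (⊤ : ℕ∞) (uncurry f)) (x t : ℝ) :
    pA (pB f) x t = pB (pA f) x t := by
  have hB := contDiff_pB hf
  have hA := contDiff_pA hf
  have e1 : uncurry (pB f) = fun p : ℝ × ℝ => fderiv ℝ (uncurry f) p (0, 1) := by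
    funext p; exact pB_eq_fderiv hf p.1 p.2
  have e2 : uncurry (pA f) = fun p : ℝ × ℝ => fderiv ℝ (uncurry f) p (1, 0) := by
    funext p; exact pA_eq_fderiv hf p.1 p.2
  have h1 : pA (pB f) x t = fderiv ℝ (fderiv ℝ (uncurry f)) (x, t) (1, 0) (0, 1) := by
    rw [pA_eq_fderiv hB x t, e1, fderiv_eval hf]
  have h2 : pB (pA f) x t = fderiv ℝ (fderiv ℝ (uncurry f)) (x, t) (0, 1) (1, 0) := by
    rw [pB_eq_fderiv hA x t, e2, fderiv_eval hf]
  rw [h1, h2]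
  exact second_derivative_symmetric
    (fun y => ((hf.differentiable (by simp)) y).hasFDerivAt)
    (((hf.fderiv_right (m := (⊤ : ℕ∞)) (by simp)).differentiable (by simp) (x, t)).hasFDerivAt) _ _

end helpers

set_option maxHeartbeats 1000000 in
/-- if `φ` solves the x-equation `−φ_xx + φ/4 = λ((m+ω)/ω)φ` of the
CH Lax pair along a smooth CH solution `u`, then
`Φ = φ_t + (ω/(2λ) + u)φ_x − (u_x/2)φ` solves the same x-equation. -/
theorem stmt_9 (ω : ℝ) (hω : ω ≠ 0) (lmb : ℂ) (hlmb : lmb ≠ 0)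
    (u : ℝ → ℝ → ℝ) (hu : IsCHSolution ω u)
    (m : ℝ → ℝ → ℝ) (hm : ∀ x t, m x t = u x t - pdx (pdx u) x t)
    (φ : ℝ → ℝ → ℂ) (hφ : ContDiff ℝ (⊤ : ℕ∞) (Function.uncurry φ))
    (hode : ∀ x t : ℝ,
      -(pdxC (pdxC φ) x t) + (1 / 4) * φ x t
        = lmb * (((m x t + ω) / ω : ℝ) : ℂ) * φ x t)
    (Φ : ℝ → ℝ → ℂ)
    (hΦ : ∀ x t : ℝ,
      Φ x t = pdtC φ x t + ((ω : ℂ) / (2 * lmb) + (u x t : ℂ)) * pdxC φ x t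
        - ((pdx u x t : ℝ) : ℂ) / 2 * φ x t) :
    ∀ x t : ℝ,
      -(pdxC (pdxC Φ) x t) + (1 / 4) * Φ x t
        = lmb * (((m x t + ω) / ω : ℝ) : ℂ) * Φ x t := by
  obtain ⟨hu1, hu2⟩ := hu
  -- identify pdx/pdt with the generic pA/pB
  have epx : pdx = @pA ℝ _ _ := rfl
  have ept : pdt = @pB ℝ _ _ := rfl
  have epxC : pdxC = @pA ℂ _ _ := rfl
  have eptC : pdtC = @pB ℂ _ _ := rfl
  set c : ℂ := (ω : ℂ) / (2 * lmb) with hc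
  -- smoothness of the various partial derivatives
  have hψ : ContDiff ℝ (⊤ : ℕ∞) (Function.uncurry (pdxC φ)) := by rw [epxC]; exact contDiff_pA hφ
  have hχ : ContDiff ℝ (⊤ : ℕ∞) (Function.uncurry (pdxC (pdxC φ))) := by
    rw [epxC]; exact contDiff_pA (by rw [← epxC]; exact hψ)
  have hφt : ContDiff ℝ (⊤ : ℕ∞) (Function.uncurry (pdtC φ)) := by rw [eptC]; exact contDiff_pB hφ
  have huA : ContDiff ℝ (⊤ : ℕ∞) (Function.uncurry (pdx u)) := by rw [epx]; exact contDiff_pA hu1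
  have huAA : ContDiff ℝ (⊤ : ℕ∞) (Function.uncurry (pdx (pdx u))) := by
    rw [epx]; exact contDiff_pA (by rw [← epx]; exact huA)
  -- pointwise derivative facts
  have hU : ∀ x t : ℝ, HasDerivAt (fun x' => u x' t) (pdx u x t) x := fun x t =>
    hasDerivAt_pA hu1 x t
  have hUx : ∀ x t : ℝ, HasDerivAt (fun x' => pdx u x' t) (pdx (pdx u) x t) x := fun x t =>
    hasDerivAt_pA huA x t
  have hUxx : ∀ x t : ℝ, HasDerivAt (fun x' => pdx (pdx u) x' t) (pdx (pdx (pdx u)) x t) x :=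
    fun x t => hasDerivAt_pA huAA x t
  have hUt : ∀ x t : ℝ, HasDerivAt (fun t' => u x t') (pdt u x t) t := fun x t =>
    hasDerivAt_pB hu1 x t
  have hUxxt : ∀ x t : ℝ, HasDerivAt (fun t' => pdx (pdx u) x t') (pdt (pdx (pdx u)) x t) t :=
    fun x t => hasDerivAt_pB huAA x t
  have hP : ∀ x t : ℝ, HasDerivAt (fun x' => φ x' t) (pdxC φ x t) x := fun x t =>
    hasDerivAt_pA hφ x t
  have hS : ∀ x t : ℝ, HasDerivAt (fun x' => pdxC φ x' t) (pdxC (pdxC φ) x t) x := fun x t =>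
    hasDerivAt_pA hψ x t
  have hSS : ∀ x t : ℝ, HasDerivAt (fun x' => pdxC (pdxC φ) x' t)
      (pdxC (pdxC (pdxC φ)) x t) x := fun x t => hasDerivAt_pA hχ x t
  have hT : ∀ x t : ℝ, HasDerivAt (fun x' => pdtC φ x' t) (pdxC (pdtC φ) x t) x := fun x t =>
    hasDerivAt_pA hφt x t
  have hφtx : ContDiff ℝ (⊤ : ℕ∞) (Function.uncurry (pdxC (pdtC φ))) := by
    rw [epxC]; exact contDiff_pA hφt
  have hTT : ∀ x t : ℝ, HasDerivAt (fun x' => pdxC (pdtC φ) x' t)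
      (pdxC (pdxC (pdtC φ)) x t) x := fun x t => hasDerivAt_pA hφtx x t
  have hPt : ∀ x t : ℝ, HasDerivAt (fun t' => φ x t') (pdtC φ x t) t := fun x t =>
    hasDerivAt_pB hφ x t
  -- ode in explicit form
  have hQ : ∀ x t : ℝ, pdxC (pdxC φ) x t
      = (1 / 4) * φ x t
        - lmb * (((u x t - pdx (pdx u) x t + ω) / ω : ℝ) : ℂ) * φ x t := by
    intro x t
    have h := hode x t
    rw [hm x t] at h
    linear_combination -h
  -- first derivative of Φ in x
  have hΦx : ∀ x t : ℝ, pdxC Φ x t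
      = pdxC (pdtC φ) x t
        + (((pdx u x t : ℝ) : ℂ) * pdxC φ x t + (c + (u x t : ℂ)) * pdxC (pdxC φ) x t)
        - (((pdx (pdx u) x t : ℝ) : ℂ) / 2 * φ x t
            + ((pdx u x t : ℝ) : ℂ) / 2 * pdxC φ x t) := by
    intro x t
    have hfun : (fun x' => Φ x' t)
        = fun x' => pdtC φ x' t + (c + ((u x' t : ℝ) : ℂ)) * pdxC φ x' t
            - ((pdx u x' t : ℝ) : ℂ) / 2 * φ x' t := funext fun x' => hΦ x' t
    have hd : HasDerivAt (fun x' => Φ x' t)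
        (pdxC (pdtC φ) x t
          + (((pdx u x t : ℝ) : ℂ) * pdxC φ x t + (c + (u x t : ℂ)) * pdxC (pdxC φ) x t)
          - (((pdx (pdx u) x t : ℝ) : ℂ) / 2 * φ x t
              + ((pdx u x t : ℝ) : ℂ) / 2 * pdxC φ x t)) x := by
      rw [hfun]
      exact ((hT x t).add ((((hU x t).ofReal_comp).const_add c).mul (hS x t))).sub
        ((((hUx x t).ofReal_comp).div_const 2).mul (hP x t))
    exact hd.deriv
  -- second derivative of Φ in x
  have hΦxx : ∀ x t : ℝ, pdxC (pdxC Φ) x t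
      = pdxC (pdxC (pdtC φ)) x t
        + ((((pdx (pdx u) x t : ℝ) : ℂ) * pdxC φ x t
              + ((pdx u x t : ℝ) : ℂ) * pdxC (pdxC φ) x t)
            + (((pdx u x t : ℝ) : ℂ) * pdxC (pdxC φ) x t
              + (c + (u x t : ℂ)) * pdxC (pdxC (pdxC φ)) x t))
        - ((((pdx (pdx (pdx u)) x t : ℝ) : ℂ) / 2 * φ x t
              + ((pdx (pdx u) x t : ℝ) : ℂ) / 2 * pdxC φ x t)
            + (((pdx (pdx u) x t : ℝ) : ℂ) / 2 * pdxC φ x t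
              + ((pdx u x t : ℝ) : ℂ) / 2 * pdxC (pdxC φ) x t)) := by
    intro x t
    have hfun : (fun x' => pdxC Φ x' t)
        = fun x' => pdxC (pdtC φ) x' t
            + (((pdx u x' t : ℝ) : ℂ) * pdxC φ x' t
                + (c + ((u x' t : ℝ) : ℂ)) * pdxC (pdxC φ) x' t)
            - (((pdx (pdx u) x' t : ℝ) : ℂ) / 2 * φ x' t
                + ((pdx u x' t : ℝ) : ℂ) / 2 * pdxC φ x' t) := funext fun x' => hΦx x' t
    have hd : HasDerivAt (fun x' => pdxC Φ x' t)
        (pdxC (pdxC (pdtC φ)) x t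
          + ((((pdx (pdx u) x t : ℝ) : ℂ) * pdxC φ x t
                + ((pdx u x t : ℝ) : ℂ) * pdxC (pdxC φ) x t)
              + (((pdx u x t : ℝ) : ℂ) * pdxC (pdxC φ) x t
                + (c + (u x t : ℂ)) * pdxC (pdxC (pdxC φ)) x t))
          - ((((pdx (pdx (pdx u)) x t : ℝ) : ℂ) / 2 * φ x t
                + ((pdx (pdx u) x t : ℝ) : ℂ) / 2 * pdxC φ x t)
              + (((pdx (pdx u) x t : ℝ) : ℂ) / 2 * pdxC φ x t
                + ((pdx u x t : ℝ) : ℂ) / 2 * pdxC (pdxC φ) x t))) x := by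
      rw [hfun]
      exact ((hTT x t).add
        (((((hUx x t).ofReal_comp).mul (hS x t)).add
          ((((hU x t).ofReal_comp).const_add c).mul (hSS x t))))).sub
        (((((hUxx x t).ofReal_comp).div_const 2).mul (hP x t)).add
          ((((hUx x t).ofReal_comp).div_const 2).mul (hS x t)))
    exact hd.deriv
  -- Clairaut: move the t-derivative outside
  have hswap : ∀ x t : ℝ, pdxC (pdxC (pdtC φ)) x t = pdtC (pdxC (pdxC φ)) x t := by
    intro x t
    have e1 : pdxC (pdtC φ) = pdtC (pdxC φ) := by
      funext a b
      rw [epxC, eptC]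
      exact pA_pB_swap hφ a b
    rw [e1]
    rw [epxC, eptC]
    exact pA_pB_swap (by rw [← epxC]; exact hψ) x t
  -- t-derivative of φ_xx via the ode
  have hχt : ∀ x t : ℝ, pdtC (pdxC (pdxC φ)) x t
      = (1 / 4) * pdtC φ x t
        - (lmb * (((pdt u x t - pdt (pdx (pdx u)) x t) / ω : ℝ) : ℂ) * φ x t
            + lmb * (((u x t - pdx (pdx u) x t + ω) / ω : ℝ) : ℂ) * pdtC φ x t) := by
    intro x t
    have hfun : (fun t' => pdxC (pdxC φ) x t')
        = fun t' => (1 / 4) * φ x t'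
            - lmb * (((u x t' - pdx (pdx u) x t' + ω) / ω : ℝ) : ℂ) * φ x t' :=
      funext fun t' => hQ x t'
    have hd : HasDerivAt (fun t' => pdxC (pdxC φ) x t')
        ((1 / 4) * pdtC φ x t
          - (lmb * (((pdt u x t - pdt (pdx (pdx u)) x t) / ω : ℝ) : ℂ) * φ x t
              + lmb * (((u x t - pdx (pdx u) x t + ω) / ω : ℝ) : ℂ) * pdtC φ x t)) t := by
      rw [hfun]
      exact ((hPt x t).const_mul (1 / 4 : ℂ)).sub
        ((((((((hUt x t).sub (hUxxt x t)).add_const ω).div_const ω).ofReal_comp).const_mul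
          lmb).mul (hPt x t)).congr_deriv (by push_cast [Pi.sub_apply]; ring))
    exact hd.deriv
  -- x-derivative of φ_xx via the ode
  have hθ : ∀ x t : ℝ, pdxC (pdxC (pdxC φ)) x t
      = (1 / 4) * pdxC φ x t
        - (lmb * (((pdx u x t - pdx (pdx (pdx u)) x t) / ω : ℝ) : ℂ) * φ x t
            + lmb * (((u x t - pdx (pdx u) x t + ω) / ω : ℝ) : ℂ) * pdxC φ x t) := by
    intro x t
    have hfun : (fun x' => pdxC (pdxC φ) x' t)
        = fun x' => (1 / 4) * φ x' t
            - lmb * (((u x' t - pdx (pdx u) x' t + ω) / ω : ℝ) : ℂ) * φ x' t :=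
      funext fun x' => hQ x' t
    have hd : HasDerivAt (fun x' => pdxC (pdxC φ) x' t)
        ((1 / 4) * pdxC φ x t
          - (lmb * (((pdx u x t - pdx (pdx (pdx u)) x t) / ω : ℝ) : ℂ) * φ x t
              + lmb * (((u x t - pdx (pdx u) x t + ω) / ω : ℝ) : ℂ) * pdxC φ x t)) x := by
      rw [hfun]
      exact ((hP x t).const_mul (1 / 4 : ℂ)).sub
        ((((((((hU x t).sub (hUxx x t)).add_const ω).div_const ω).ofReal_comp).const_mul
          lmb).mul (hP x t)).congr_deriv (by push_cast [Pi.sub_apply]; ring))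
    exact hd.deriv
  -- final computation
  intro x t
  have hch : ((pdt u x t : ℝ) : ℂ) - ((pdt (pdx (pdx u)) x t : ℝ) : ℂ)
      + 2 * (ω : ℂ) * ((pdx u x t : ℝ) : ℂ)
      + 3 * ((u x t : ℝ) : ℂ) * ((pdx u x t : ℝ) : ℂ)
      = 2 * ((pdx u x t : ℝ) : ℂ) * ((pdx (pdx u) x t : ℝ) : ℂ)
        + ((u x t : ℝ) : ℂ) * ((pdx (pdx (pdx u)) x t : ℝ) : ℂ) := by
    exact_mod_cast hu2 x t
  have hω' : (ω : ℂ) ≠ 0 := by exact_mod_cast hω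
  have hcan : ((ω : ℂ) / (2 * lmb)) * (lmb * ((((pdx u x t : ℝ) : ℂ)
        - ((pdx (pdx (pdx u)) x t : ℝ) : ℂ)) / (ω : ℂ)))
      = (((pdx u x t : ℝ) : ℂ) - ((pdx (pdx (pdx u)) x t : ℝ) : ℂ)) / 2 := by
    field_simp
  rw [hm x t, hΦxx x t, hswap x t, hχt x t, hθ x t, hQ x t, hΦ x t, hc]
  push_cast
  linear_combination (lmb * φ x t / (ω : ℂ)) * hch + φ x t * hcan
end

section
/- Let c > 0 and ω > 0. Let m : ℝ → ℝ be continuous with m(x) ≤ c and m(x) + ω > 0 for all x, and with m(x) → c as x → −∞. Then there is no twice continuously differentiable φ : ℝ → ℂ satisfying −φ'' + (1/4)φ = ((m+ω)/(4(c+ω))) φ on ℝ together with all of the following: ((m(x)+ω)/ω)^{1/4} φ(x) → 1 and φ'(x) → 0 as x → −∞; φ(x) → 0 and φ'(x) → 0 as x → +∞; and |φ'|² and (c − m)·|φ|² are integrable on ℝ. -/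
/-!
Put `q = (c - m) / (4 (c + ω)) ≥ 0`, so the equation reads `φ'' = q φ`. Then the energy
`⟪φ, φ'⟫ = ½ (‖φ‖²)'` has derivative `‖φ'‖² + q ‖φ‖² ≥ 0` and is nondecreasing. The normalisation at
`−∞` makes `φ` converge there (since `m → c`), and with `φ' → 0` at both ends the energy tends to `0`
at `±∞`. Hence it vanishes identically, so `φ' ≡ 0`, `φ` is constant, equal to its limit `0` at
`+∞`, contradicting the normalisation at `−∞`.
-/

open MeasureTheory Filter

open scoped RealInnerProductSpace

section SturmLiouville

variable {E : Type*} [NormedAddCommGroup E] [InnerProductSpace ℝ E] {φ : ℝ → E} {q : ℝ → ℝ}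

theorem hasDerivAt_inner_self_deriv (hφ : Differentiable ℝ φ)
    (hφ' : Differentiable ℝ (deriv φ)) (hode : ∀ x, deriv (deriv φ) x = q x • φ x) (x : ℝ) :
    HasDerivAt (fun y => ⟪φ y, deriv φ y⟫) (‖deriv φ x‖ ^ 2 + q x * ‖φ x‖ ^ 2) x := by
  refine ((hφ x).hasDerivAt.inner ℝ (hφ' x).hasDerivAt).congr_deriv ?_
  rw [hode, real_inner_smul_right, real_inner_self_eq_norm_sq, real_inner_self_eq_norm_sq]
  ring

theorem deriv_eq_zero_of_tendsto_inner_self_deriv (hφ : Differentiable ℝ φ)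
    (hφ' : Differentiable ℝ (deriv φ)) (hode : ∀ x, deriv (deriv φ) x = q x • φ x)
    (hq : ∀ x, 0 ≤ q x) (h_bot : Tendsto (fun y => ⟪φ y, deriv φ y⟫) atBot (nhds 0))
    (h_top : Tendsto (fun y => ⟪φ y, deriv φ y⟫) atTop (nhds 0)) (x : ℝ) :
    deriv φ x = 0 := by
  set F := fun y => ⟪φ y, deriv φ y⟫
  have hF : ∀ y, HasDerivAt F _ y := hasDerivAt_inner_self_deriv hφ hφ' hode
  have hF_mono : Monotone F :=
    monotone_of_deriv_nonneg (fun y => (hF y).differentiableAt) fun y => by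
      rw [(hF y).deriv]; have := hq y; positivity
  have hF_zero : F = 0 := funext fun y => le_antisymm
    (ge_of_tendsto h_top (eventually_atTop.mpr ⟨y, fun _ => (hF_mono ·)⟩))
    (le_of_tendsto h_bot (eventually_atBot.mpr ⟨y, fun _ => (hF_mono ·)⟩))
  have h_energy : ‖deriv φ x‖ ^ 2 + q x * ‖φ x‖ ^ 2 = 0 := by
    rw [← (hF x).deriv, hF_zero]; exact deriv_const x 0
  have hqx := hq x
  have h_sq : ‖deriv φ x‖ ^ 2 = 0 := by nlinarith [sq_nonneg ‖deriv φ x‖, sq_nonneg ‖φ x‖]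
  simpa using h_sq

theorem eq_zero_of_tendsto_of_deriv_eq_smul (hφ : Differentiable ℝ φ)
    (hφ' : Differentiable ℝ (deriv φ)) (hode : ∀ x, deriv (deriv φ) x = q x • φ x)
    (hq : ∀ x, 0 ≤ q x) {a : E} (hφ_bot : Tendsto φ atBot (nhds a))
    (hφ'_bot : Tendsto (deriv φ) atBot (nhds 0)) (hφ_top : Tendsto φ atTop (nhds 0))
    (hφ'_top : Tendsto (deriv φ) atTop (nhds 0)) (x : ℝ) :
    φ x = 0 := by
  have h_bot := hφ_bot.inner (𝕜 := ℝ) hφ'_bot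
  have h_top := hφ_top.inner (𝕜 := ℝ) hφ'_top
  rw [inner_zero_right] at h_bot h_top
  have hφ'_zero := deriv_eq_zero_of_tendsto_inner_self_deriv hφ hφ' hode hq h_bot h_top
  have hconst : φ = fun _ => φ x := funext fun y => is_const_of_deriv_eq_zero hφ hφ'_zero y x
  exact tendsto_nhds_unique (hconst ▸ tendsto_const_nhds) hφ_top

end SturmLiouville

theorem stmt_11_general (c ω : ℝ) (hω : 0 < ω)
    (m : ℝ → ℝ)
    (hmc : ∀ x, m x ≤ c) (hpos : ∀ x, m x + ω > 0)
    (hm_bot : Tendsto m atBot (nhds c)) :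
    ¬ ∃ φ : ℝ → ℂ, ContDiff ℝ 2 φ ∧
      (∀ x : ℝ,
        -(deriv (deriv φ) x) + (1 / 4) * φ x
          = (((m x + ω) / (4 * (c + ω)) : ℝ) : ℂ) * φ x) ∧
      Tendsto (fun x => ((((m x + ω) / ω) ^ ((1 : ℝ) / 4) : ℝ) : ℂ) * φ x)
        atBot (nhds 1) ∧
      Tendsto (deriv φ) atBot (nhds 0) ∧
      Tendsto φ atTop (nhds 0) ∧
      Tendsto (deriv φ) atTop (nhds 0) ∧
      Integrable (fun x => ‖deriv φ x‖ ^ 2) ∧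
      Integrable (fun x => (c - m x) * ‖φ x‖ ^ 2) := by
  rintro ⟨φ, hφ, hode, hwφ_bot, hφ'_bot, hφ_top, hφ'_top, -, -⟩
  have hcω : 0 < c + ω := by linarith [hpos 0, hmc 0]
  set w : ℝ → ℝ := fun x => ((m x + ω) / ω) ^ ((1 : ℝ) / 4)
  have hw_ne : ∀ x, (w x : ℂ) ≠ 0 := fun x =>
    Complex.ofReal_ne_zero.mpr (Real.rpow_pos_of_pos (div_pos (hpos x) hω) _).ne'
  have hw_bot : Tendsto (fun x => (w x : ℂ)) atBot (nhds (((c + ω) / ω) ^ ((1 : ℝ) / 4) : ℝ)) :=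
    Complex.continuous_ofReal.continuousAt.tendsto.comp
      (((hm_bot.add_const ω).div_const ω).rpow_const (Or.inr (by norm_num)))
  have hφ_bot : Tendsto φ atBot (nhds ((((c + ω) / ω) ^ ((1 : ℝ) / 4) : ℝ) : ℂ)⁻¹) := by
    have := hw_bot.inv₀ (Complex.ofReal_ne_zero.mpr (Real.rpow_pos_of_pos (div_pos hcω hω) _).ne')
    simpa using (this.mul hwφ_bot).congr fun x => inv_mul_cancel_left₀ (hw_ne x) (φ x)
  have hode' : ∀ x, deriv (deriv φ) x = ((c - m x) / (4 * (c + ω))) • φ x := fun x => by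
    have hq : (c - m x) / (4 * (c + ω)) = 1 / 4 - (m x + ω) / (4 * (c + ω)) := by
      field_simp; ring
    rw [Complex.real_smul, hq]
    push_cast at hode ⊢
    linear_combination -(hode x)
  have hq_nonneg : ∀ x, 0 ≤ (c - m x) / (4 * (c + ω)) := fun x =>
    div_nonneg (sub_nonneg.mpr (hmc x)) (by positivity)
  have hφ_zero := eq_zero_of_tendsto_of_deriv_eq_smul (hφ.differentiable (by norm_num))
    ((hφ.deriv' (n := 1)).differentiable one_ne_zero) hode' hq_nonneg hφ_bot hφ'_bot hφ_top hφ'_top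
  simp only [hφ_zero, mul_zero] at hwφ_bot
  exact zero_ne_one (tendsto_nhds_unique tendsto_const_nhds hwφ_bot)

/-- if `m ≤ c`, `m + ω > 0` and `m → c` at `−∞` (with `c, ω > 0`),
then there is no C² solution `φ` of `−φ'' + φ/4 = ((m+ω)/(4(c+ω)))φ` with
`((m+ω)/ω)^{1/4} φ → 1`, `φ' → 0` at `−∞`, `φ → 0`, `φ' → 0` at `+∞`, and
`|φ'|²`, `(c−m)|φ|²` integrable. -/
theorem stmt_11 (c ω : ℝ) (hc : 0 < c) (hω : 0 < ω)
    (m : ℝ → ℝ) (hm : Continuous m)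
    (hmc : ∀ x, m x ≤ c) (hpos : ∀ x, m x + ω > 0)
    (hm_bot : Tendsto m atBot (nhds c)) :
    ¬ ∃ φ : ℝ → ℂ, ContDiff ℝ 2 φ ∧
      (∀ x : ℝ,
        -(deriv (deriv φ) x) + (1 / 4) * φ x
          = (((m x + ω) / (4 * (c + ω)) : ℝ) : ℂ) * φ x) ∧
      Tendsto (fun x => ((((m x + ω) / ω) ^ ((1 : ℝ) / 4) : ℝ) : ℂ) * φ x)
        atBot (nhds 1) ∧
      Tendsto (deriv φ) atBot (nhds 0) ∧
      Tendsto φ atTop (nhds 0) ∧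
      Tendsto (deriv φ) atTop (nhds 0) ∧
      Integrable (fun x => ‖deriv φ x‖ ^ 2) ∧
      Integrable (fun x => (c - m x) * ‖φ x‖ ^ 2) :=
  stmt_11_general c ω hω m hmc hpos hm_bot
end
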